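/- arXiv:math/0605790 — 6 statements merged into one kernel-verified Lean document; each statement's English description precedes it below -/
import Mathlib

section
/- Let (μ_n) be a sequence of compactly supported Borel probability measures on ℝ converging in moments to a compactly supported Borel probability measure μ on ℝ, and let C > 0 be such that the support of μ is contained in the open interval (−C, C). Let f : ℝ → ℝ be a Borel function for which there exist M > 0 and r ∈ ℕ with |f(t)| ≤ M(t^{2r} + 1) for all t ∈ ℝ. Then lim_{n→∞} ∫_{{|t| ≥ C}} f dμ_n = 0. -/
/-!
On `{C ≤ |t|}` the bound `M (t ^ (2r) + 1)` on `|f|` is dominated by the polynomial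
`M (t ^ (2r) + 1) (t / C) ^ (2m)` for every `m`. Integrals of polynomials pass to the limit under
convergence of moments, so `limsup ‖∫_{C ≤ |t|} f dμ_n‖ ≤ ∫ M (t ^ (2r) + 1) (t / C) ^ (2m) dμ`.
Since `μ` lives on `(-C, C)`, the right-hand side tends to `0` as `m → ∞` by dominated convergence.
-/

open MeasureTheory Filter Topology

lemma tendsto_nhds_zero_of_norm_le_of_tendsto {ι κ E : Type*} [SeminormedAddCommGroup E]
    {l : Filter ι} {l' : Filter κ} [l'.NeBot] {a : ι → E} {b : κ → ι → ℝ} {c : κ → ℝ}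
    (hb : ∀ m, Tendsto (b m) l (𝓝 (c m))) (hc : Tendsto c l' (𝓝 0))
    (hab : ∀ m n, ‖a n‖ ≤ b m n) : Tendsto a l (𝓝 0) := by
  refine tendsto_zero_iff_norm_tendsto_zero.2 <| Metric.tendsto_nhds.2 fun ε hε => ?_
  obtain ⟨m, hm⟩ := (hc.eventually (gt_mem_nhds hε)).exists
  filter_upwards [(hb m).eventually (gt_mem_nhds hm)] with n hn
  rw [Real.dist_0_eq_abs, abs_norm]
  exact (hab m n).trans_lt hn

lemma ae_mem_of_forall_notMem_exists_nhds_measure_eq_zero {X : Type*} [TopologicalSpace X]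
    [HereditarilyLindelofSpace X] [MeasurableSpace X] {μ : Measure X} {s : Set X}
    (h : ∀ x ∉ s, ∃ U ∈ 𝓝 x, μ U = 0) : ∀ᵐ x ∂μ, x ∈ s :=
  mem_of_superset μ.support_mem_ae fun x hx =>
    of_not_not fun hxs => Measure.notMem_support_iff_exists.2 (h x hxs) hx

lemma Continuous.integrable_of_ae_mem_compact {X E : Type*} [TopologicalSpace X] [T2Space X]
    [MeasurableSpace X] [OpensMeasurableSpace X] [NormedAddCommGroup E] {ν : Measure X}
    [IsFiniteMeasureOnCompacts ν] {K : Set X} {g : X → E} (hg : Continuous g) (hK : IsCompact K)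
    (hνK : ∀ᵐ x ∂ν, x ∈ K) : Integrable g ν := by
  have := hg.continuousOn.integrableOn_compact (μ := ν) hK
  rwa [IntegrableOn, Measure.restrict_eq_self_of_ae_mem hνK] at this

namespace Polynomial

lemma integrable_eval_of_integrable_pow {ν : Measure ℝ} (hν : ∀ p : ℕ, Integrable (· ^ p) ν)
    (P : ℝ[X]) : Integrable P.eval ν := by
  simp_rw [eval_eq_sum_range]
  exact integrable_finsetSum _ fun i _ => (hν i).const_mul _

lemma integral_eval_eq_sum_moments {ν : Measure ℝ} (hν : ∀ p : ℕ, Integrable (· ^ p) ν)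
    (P : ℝ[X]) :
    ∫ t, P.eval t ∂ν = ∑ i ∈ Finset.range (P.natDegree + 1), P.coeff i * ∫ t, t ^ i ∂ν := by
  simp_rw [eval_eq_sum_range, ← integral_const_mul]
  exact integral_finsetSum _ fun i _ => (hν i).const_mul _

lemma tendsto_integral_eval_of_tendsto_moments {ι : Type*} {l : Filter ι} {μ : Measure ℝ}
    {μs : ι → Measure ℝ} (hμ : ∀ p : ℕ, Integrable (· ^ p) μ)
    (hμs : ∀ n, ∀ p : ℕ, Integrable (· ^ p) (μs n))
    (hmom : ∀ p : ℕ, Tendsto (fun n => ∫ t, t ^ p ∂(μs n)) l (𝓝 (∫ t, t ^ p ∂μ)))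
    (P : ℝ[X]) :
    Tendsto (fun n => ∫ t, P.eval t ∂(μs n)) l (𝓝 (∫ t, P.eval t ∂μ)) := by
  simp_rw [integral_eval_eq_sum_moments (hμs _), integral_eval_eq_sum_moments hμ]
  exact tendsto_finsetSum _ fun i _ => (hmom i).const_mul _

end Polynomial

lemma tendsto_integral_mul_pow_of_ae_norm_lt_one {α : Type*} [MeasurableSpace α]
    {μ : Measure α} {g q : α → ℝ} (hg : Integrable g μ) (hq : AEStronglyMeasurable q μ)
    (hq1 : ∀ᵐ x ∂μ, ‖q x‖ < 1) :
    Tendsto (fun m : ℕ => ∫ x, g x * q x ^ m ∂μ) atTop (𝓝 0) := by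
  have hlim : ∀ᵐ x ∂μ, Tendsto (fun m : ℕ => g x * q x ^ m) atTop (𝓝 0) := by
    filter_upwards [hq1] with x hx
    simpa using (tendsto_pow_atTop_nhds_zero_of_norm_lt_one hx).const_mul (g x)
  have hdom : ∀ m : ℕ, ∀ᵐ x ∂μ, ‖g x * q x ^ m‖ ≤ ‖g x‖ := fun m => by
    filter_upwards [hq1] with x hx
    rw [norm_mul, norm_pow]
    exact mul_le_of_le_one_right (norm_nonneg _) (pow_le_one₀ (norm_nonneg _) hx.le)
  simpa using tendsto_integral_of_dominated_convergence _
    (fun m => hg.aestronglyMeasurable.mul (hq.pow m)) hg.norm hdom hlim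

noncomputable def tailEnvelope (M C : ℝ) (r m : ℕ) : Polynomial ℝ :=
  .C M * (.X ^ (2 * r) + 1) * ((.C C⁻¹ * .X) ^ 2) ^ m

section tailEnvelope

variable {M C : ℝ} {r m : ℕ}

lemma eval_tailEnvelope (t : ℝ) :
    (tailEnvelope M C r m).eval t = M * (t ^ (2 * r) + 1) * ((C⁻¹ * t) ^ 2) ^ m := by
  simp [tailEnvelope]

lemma mul_pow_two_mul_add_one_nonneg (hM : 0 ≤ M) (t : ℝ) : 0 ≤ M * (t ^ (2 * r) + 1) := by
  rw [pow_mul]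
  positivity

lemma eval_tailEnvelope_nonneg (hM : 0 ≤ M) (t : ℝ) : 0 ≤ (tailEnvelope M C r m).eval t := by
  rw [eval_tailEnvelope]
  exact mul_nonneg (mul_pow_two_mul_add_one_nonneg hM t) (by positivity)

lemma le_eval_tailEnvelope (hC : 0 < C) (hM : 0 ≤ M) {t : ℝ} (ht : C ≤ |t|) :
    M * (t ^ (2 * r) + 1) ≤ (tailEnvelope M C r m).eval t := by
  have hq : 1 ≤ ((C⁻¹ * t) ^ 2) ^ m := by
    refine one_le_pow₀ ((one_le_sq_iff_one_le_abs _).2 ?_)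
    rw [abs_mul, abs_inv, abs_of_pos hC]
    exact (le_inv_mul_iff₀ hC).2 (by simpa using ht)
  rw [eval_tailEnvelope]
  exact le_mul_of_one_le_right (mul_pow_two_mul_add_one_nonneg hM t) hq

lemma tendsto_integral_tailEnvelope (hC : 0 < C) {μ : Measure ℝ} [IsFiniteMeasure μ]
    (hμ : ∀ p : ℕ, Integrable (· ^ p) μ) (hμC : ∀ᵐ t ∂μ, |t| < C) :
    Tendsto (fun m => ∫ t, (tailEnvelope M C r m).eval t ∂μ) atTop (𝓝 0) := by
  simp_rw [eval_tailEnvelope]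
  refine tendsto_integral_mul_pow_of_ae_norm_lt_one (((hμ _).add (integrable_const 1)).const_mul M)
    (by fun_prop) (hμC.mono fun t ht => ?_)
  rw [norm_pow, Real.norm_eq_abs, abs_mul, abs_inv, abs_of_pos hC]
  exact pow_lt_one₀ (by positivity) ((inv_mul_lt_one₀ hC).2 ht) two_ne_zero

lemma norm_setIntegral_abs_ge_le_integral_tailEnvelope (hC : 0 < C) (hM : 0 ≤ M)
    {ν : Measure ℝ} (hν : ∀ p : ℕ, Integrable (· ^ p) ν) {f : ℝ → ℝ}
    (hf : ∀ t, |f t| ≤ M * (t ^ (2 * r) + 1)) :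
    ‖∫ t in {t : ℝ | C ≤ |t|}, f t ∂ν‖ ≤ ∫ t, (tailEnvelope M C r m).eval t ∂ν := by
  have hint := (tailEnvelope M C r m).integrable_eval_of_integrable_pow hν
  calc ‖∫ t in {t : ℝ | C ≤ |t|}, f t ∂ν‖
      ≤ ∫ t in {t : ℝ | C ≤ |t|}, (tailEnvelope M C r m).eval t ∂ν :=
        norm_integral_le_of_norm_le hint.integrableOn <|
          ae_restrict_of_forall_mem (measurableSet_le measurable_const measurable_abs)
            fun t ht => (hf t).trans (le_eval_tailEnvelope hC hM ht)
    _ ≤ ∫ t, (tailEnvelope M C r m).eval t ∂ν :=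
        setIntegral_le_integral hint (.of_forall (eval_tailEnvelope_nonneg hM))

end tailEnvelope

theorem stmt1_general (μ : Measure ℝ) [IsProbabilityMeasure μ]
    (μs : ℕ → Measure ℝ) [∀ n, IsProbabilityMeasure (μs n)]
    (hcompn : ∀ n, ∃ K : Set ℝ, IsCompact K ∧ μs n Kᶜ = 0)
    (C : ℝ) (hC : 0 < C)
    (hsupp : ∀ x : ℝ, x ∉ Set.Ioo (-C) C → ∃ U ∈ 𝓝 x, μ U = 0)
    (hmom : ∀ p : ℕ,
      Tendsto (fun n => ∫ t, t ^ p ∂(μs n)) atTop (𝓝 (∫ t, t ^ p ∂μ)))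
    (f : ℝ → ℝ)
    (M : ℝ) (hM : 0 < M) (r : ℕ)
    (hbound : ∀ t : ℝ, |f t| ≤ M * (t ^ (2 * r) + 1)) :
    Tendsto (fun n => ∫ t in {t : ℝ | C ≤ |t|}, f t ∂(μs n)) atTop (𝓝 0) := by
  have hμC : ∀ᵐ t ∂μ, t ∈ Set.Ioo (-C) C :=
    ae_mem_of_forall_notMem_exists_nhds_measure_eq_zero hsupp
  have hμ : ∀ p : ℕ, Integrable (· ^ p) μ := fun p =>
    (continuous_pow p).integrable_of_ae_mem_compact isCompact_Icc
      (hμC.mono fun _ ht => Set.Ioo_subset_Icc_self ht)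
  have hμs : ∀ n, ∀ p : ℕ, Integrable (· ^ p) (μs n) := fun n p => by
    obtain ⟨K, hK, hK0⟩ := hcompn n
    exact (continuous_pow p).integrable_of_ae_mem_compact hK (mem_ae_iff.2 hK0)
  exact tendsto_nhds_zero_of_norm_le_of_tendsto
    (fun m => (tailEnvelope M C r m).tendsto_integral_eval_of_tendsto_moments hμ hμs hmom)
    (tendsto_integral_tailEnvelope hC hμ (hμC.mono fun _ ht => abs_lt.2 ht))
    (fun m n => norm_setIntegral_abs_ge_le_integral_tailEnvelope hC hM.le (hμs n) hbound)

/-- If a sequence `(μ n)` of compactly supported Borel probability measures on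
`ℝ` converges in moments to a compactly supported Borel probability measure `μ` whose topological
support is contained in `(-C, C)` (with `C > 0`), and `f : ℝ → ℝ` is a Borel function with
`|f t| ≤ M (t ^ (2r) + 1)` for all `t` (for some `M > 0` and `r ∈ ℕ`), then
`∫_{|t| ≥ C} f dμ_n → 0`. -/
theorem stmt1 (μ : Measure ℝ) [IsProbabilityMeasure μ]
    (μs : ℕ → Measure ℝ) [∀ n, IsProbabilityMeasure (μs n)]
    (hcomp : ∃ K : Set ℝ, IsCompact K ∧ μ Kᶜ = 0)
    (hcompn : ∀ n, ∃ K : Set ℝ, IsCompact K ∧ μs n Kᶜ = 0)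
    (C : ℝ) (hC : 0 < C)
    (hsupp : ∀ x : ℝ, x ∉ Set.Ioo (-C) C → ∃ U ∈ 𝓝 x, μ U = 0)
    (hmom : ∀ p : ℕ,
      Tendsto (fun n => ∫ t, t ^ p ∂(μs n)) atTop (𝓝 (∫ t, t ^ p ∂μ)))
    (f : ℝ → ℝ) (hf : Measurable f)
    (M : ℝ) (hM : 0 < M) (r : ℕ)
    (hbound : ∀ t : ℝ, |f t| ≤ M * (t ^ (2 * r) + 1)) :
    Tendsto (fun n => ∫ t in {t : ℝ | C ≤ |t|}, f t ∂(μs n)) atTop (𝓝 0) :=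
  stmt1_general μ μs hcompn C hC hsupp hmom f M hM r hbound
end

section
/- Let k ≥ 1, C > 0, (d_n)_{n≥1} a sequence of positive integers, and for each n let g_{n,1}, …, g_{n,k} be Hermitian d_n × d_n complex matrices; let τ_n denote the normalized trace on d_n × d_n matrices. Assume: (i) for every monomial P in k noncommuting variables, the limit lim_{n→∞} τ_n(P(g_{n,1}, …, g_{n,k})) exists; (ii) for each i ∈ {1, …, k} there is a Borel probability measure μ_i on ℝ whose support is contained in (−C, C) such that for every p ∈ ℕ, τ_n(g_{n,i}^p) → ∫ t^p dμ_i(t) as n → ∞. Let h : ℝ → ℝ be h(t) = t for |t| < C and h(t) = 0 for |t| ≥ C, and set g̃_{n,i} = h(g_{n,i}) (functional calculus applied to the Hermitian matrix g_{n,i}). Then for every monomial P in k noncommuting variables, lim_{n→∞} τ_n(P(g̃_{n,1}, …, g̃_{n,k})) = lim_{n→∞} τ_n(P(g_{n,1}, …, g_{n,k})). -/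
open MeasureTheory Filter Topology

/-- The normalized trace of a square complex matrix. -/
noncomputable def normTrace {d : ℕ} (x : Matrix (Fin d) (Fin d) ℂ) : ℂ :=
  x.trace / (d : ℂ)

/-- Evaluation of a monomial (a word `w` in `k` noncommuting variables) at a `k`-tuple of
matrices. -/
noncomputable def evalWord {d k : ℕ} (w : List (Fin k)) (g : Fin k → Matrix (Fin d) (Fin d) ℂ) :
    Matrix (Fin d) (Fin d) ℂ :=
  (w.map g).prod

/-!
Write `g̃ = h(g)` and `r = g - g̃`, the part of `g` spectrally supported outside `(-C, C)`.
Since `C ^ (2q) r² ≤ g ^ (2q + 2)`, the limit superior of `τ(r²)` is at most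
`∫ t ^ (2q + 2) dμ / C ^ (2q)`, which tends to `0` as `q → ∞` because `μ` lives in `(-C, C)`.
Telescoping `P(g) - P(g̃)` leaves terms `τ(V r B)` with `V` a word in the `g̃`, so `V V* ≤ C ^ (2|V|)`,
and `B` a word in the `g`. Cauchy–Schwarz bounds each of them by
`C ^ |V| τ(r²) ^ (1/2) τ(B B*) ^ (1/2)`, and `τ(B B*)` converges by hypothesis (i).
-/

open Matrix
open scoped ComplexOrder MatrixOrder

section HermitianMatrix

variable {n : Type*} [Fintype n] [DecidableEq n]

lemma Matrix.conjTranspose_cfc (φ : ℝ → ℝ) (A : Matrix n n ℂ) : (cfc φ A)ᴴ = cfc φ A :=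
  (cfc_predicate φ A).star_eq

lemma Matrix.IsHermitian.cfc_mul_conjTranspose_le {A : Matrix n n ℂ} (hA : A.IsHermitian)
    {φ : ℝ → ℝ} {c : ℝ} (hφ : ∀ t, |φ t| ≤ c) :
    cfc φ A * (cfc φ A)ᴴ ≤ algebraMap ℝ _ (c ^ 2) := by
  have hcont := A.finite_real_spectrum.continuousOn φ
  rw [conjTranspose_cfc, ← cfc_mul φ φ A hcont hcont]
  refine cfc_le_algebraMap _ _ _ (fun t _ => ?_) (A.finite_real_spectrum.continuousOn _)
    hA.isSelfAdjoint
  rw [← sq, ← sq_abs]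
  exact pow_le_pow_left₀ (abs_nonneg _) (hφ t) 2

lemma Matrix.IsHermitian.sub_cfc {A : Matrix n n ℂ} (hA : A.IsHermitian) (φ : ℝ → ℝ) :
    A - cfc φ A = cfc (fun t => t - φ t) A := by
  have hcont := A.finite_real_spectrum
  rw [cfc_sub _ _ _ (hcont.continuousOn _) (hcont.continuousOn _),
    cfc_id' ℝ A hA.isSelfAdjoint]

/-- Cauchy–Schwarz for the Hilbert–Schmidt inner product `⟪x, y⟫ = tr (y * xᴴ)`, which Mathlib
provides as the inner product induced by the positive semidefinite matrix `1`. -/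
lemma Matrix.norm_trace_mul_conjTranspose_sq_le (x y : Matrix n n ℂ) :
    ‖(x * yᴴ).trace‖ ^ 2 ≤ (x * xᴴ).trace.re * (y * yᴴ).trace.re := by
  let _ := toMatrixSeminormedAddCommGroup (1 : Matrix n n ℂ) PosSemidef.one
  let _ := toMatrixInnerProductSpace (1 : Matrix n n ℂ) PosSemidef.one
  have hinner : ∀ a b : Matrix n n ℂ, inner ℂ a b = (b * aᴴ).trace := fun a b => by
    change (b * 1 * aᴴ).trace = _
    rw [mul_one]
  have hcs := inner_mul_inner_self_le (𝕜 := ℂ) y x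
  rwa [hinner, hinner, hinner, hinner, show y * xᴴ = (x * yᴴ)ᴴ by simp, trace_conjTranspose,
    norm_star, ← sq, mul_comm] at hcs

end HermitianMatrix

section NormTrace

variable {d : ℕ}

lemma normTrace_add (x y : Matrix (Fin d) (Fin d) ℂ) :
    normTrace (x + y) = normTrace x + normTrace y := by
  simp only [normTrace, trace_add, add_div]

lemma normTrace_sub (x y : Matrix (Fin d) (Fin d) ℂ) :
    normTrace (x - y) = normTrace x - normTrace y := by
  simp only [normTrace, trace_sub, sub_div]

lemma normTrace_mul_comm (x y : Matrix (Fin d) (Fin d) ℂ) :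
    normTrace (x * y) = normTrace (y * x) := by
  rw [normTrace, normTrace, trace_mul_comm]

lemma re_normTrace_smul (c : ℝ) (x : Matrix (Fin d) (Fin d) ℂ) :
    (normTrace (c • x)).re = c * (normTrace x).re := by
  simp only [normTrace, trace_smul, Complex.div_natCast_re, Complex.smul_re, smul_eq_mul,
    mul_div_assoc]

lemma re_normTrace_mono {x y : Matrix (Fin d) (Fin d) ℂ} (h : x ≤ y) :
    (normTrace x).re ≤ (normTrace y).re := by
  simp only [normTrace, Complex.div_natCast_re]
  gcongr
  exact (tracePositiveLinearMap (Fin d) ℂ ℂ).monotone' h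

lemma re_normTrace_nonneg {x : Matrix (Fin d) (Fin d) ℂ} (h : 0 ≤ x) : 0 ≤ (normTrace x).re := by
  simpa [normTrace] using re_normTrace_mono h

lemma norm_normTrace_mul_conjTranspose_sq_le (x y : Matrix (Fin d) (Fin d) ℂ) :
    ‖normTrace (x * yᴴ)‖ ^ 2 ≤ (normTrace (x * xᴴ)).re * (normTrace (y * yᴴ)).re := by
  simp only [normTrace, norm_div, Complex.norm_natCast, Complex.div_natCast_re, div_pow]
  rw [div_mul_div_comm, ← sq]
  gcongr
  exact norm_trace_mul_conjTranspose_sq_le x y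

lemma re_normTrace_conj_le {p : Matrix (Fin d) (Fin d) ℂ} {c : ℝ}
    (hp : p ≤ algebraMap ℝ _ c) (b : Matrix (Fin d) (Fin d) ℂ) :
    (normTrace (b * p * bᴴ)).re ≤ c * (normTrace (b * bᴴ)).re := by
  calc (normTrace (b * p * bᴴ)).re ≤ (normTrace (b * algebraMap ℝ _ c * bᴴ)).re :=
        re_normTrace_mono (star_right_conjugate_le_conjugate hp b)
    _ = c * (normTrace (b * bᴴ)).re := by
        rw [Algebra.algebraMap_eq_smul_one, mul_smul_comm, mul_one, smul_mul_assoc,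
          re_normTrace_smul]

lemma norm_normTrace_mul_mul_sq_le {v r b : Matrix (Fin d) (Fin d) ℂ} {c : ℝ}
    (hv : v * vᴴ ≤ algebraMap ℝ _ c) :
    ‖normTrace (v * r * b)‖ ^ 2 ≤ c * (normTrace (r * rᴴ)).re * (normTrace (b * bᴴ)).re := by
  have hcyc : normTrace (v * r * b) = normTrace (r * (vᴴ * bᴴ)ᴴ) := by
    rw [conjTranspose_mul, conjTranspose_conjTranspose, conjTranspose_conjTranspose,
      normTrace_mul_comm, ← mul_assoc, normTrace_mul_comm]
  have hbv : normTrace (vᴴ * bᴴ * (vᴴ * bᴴ)ᴴ) = normTrace (b * (v * vᴴ) * bᴴ) := by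
    rw [conjTranspose_mul, conjTranspose_conjTranspose, conjTranspose_conjTranspose,
      normTrace_mul_comm, ← mul_assoc, ← mul_assoc, mul_assoc (b * v)]
  calc ‖normTrace (v * r * b)‖ ^ 2
      ≤ (normTrace (r * rᴴ)).re * (normTrace (vᴴ * bᴴ * (vᴴ * bᴴ)ᴴ)).re := by
        rw [hcyc]; exact norm_normTrace_mul_conjTranspose_sq_le _ _
    _ ≤ (normTrace (r * rᴴ)).re * (c * (normTrace (b * bᴴ)).re) := by
        rw [hbv]
        gcongr
        · exact re_normTrace_nonneg (mul_star_self_nonneg r)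
        · exact re_normTrace_conj_le hv b
    _ = c * (normTrace (r * rᴴ)).re * (normTrace (b * bᴴ)).re := by ring

end NormTrace

section Words

variable {d k : ℕ}

lemma evalWord_nil (g : Fin k → Matrix (Fin d) (Fin d) ℂ) : evalWord [] g = 1 := rfl

lemma evalWord_cons (i : Fin k) (w : List (Fin k)) (g : Fin k → Matrix (Fin d) (Fin d) ℂ) :
    evalWord (i :: w) g = g i * evalWord w g := by
  simp [evalWord]

lemma evalWord_append (v w : List (Fin k)) (g : Fin k → Matrix (Fin d) (Fin d) ℂ) :
    evalWord (v ++ w) g = evalWord v g * evalWord w g := by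
  simp [evalWord]

lemma conjTranspose_evalWord {g : Fin k → Matrix (Fin d) (Fin d) ℂ}
    (hg : ∀ i, (g i).IsHermitian) (w : List (Fin k)) :
    (evalWord w g)ᴴ = evalWord w.reverse g := by
  simp only [evalWord, conjTranspose_list_prod, List.map_map, List.map_reverse]
  congr 3
  exact funext fun i => (hg i).eq

lemma evalWord_mul_conjTranspose_le {g : Fin k → Matrix (Fin d) (Fin d) ℂ} {c : ℝ} (hc : 0 ≤ c)
    (hg : ∀ i, g i * (g i)ᴴ ≤ algebraMap ℝ _ c) (w : List (Fin k)) :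
    evalWord w g * (evalWord w g)ᴴ ≤ algebraMap ℝ _ (c ^ w.length) := by
  induction w with
  | nil => simp [evalWord_nil]
  | cons i w ih =>
    calc evalWord (i :: w) g * (evalWord (i :: w) g)ᴴ
        = g i * (evalWord w g * (evalWord w g)ᴴ) * (g i)ᴴ := by
          rw [evalWord_cons, conjTranspose_mul, mul_assoc, mul_assoc, mul_assoc]
      _ ≤ g i * algebraMap ℝ _ (c ^ w.length) * (g i)ᴴ :=
          star_right_conjugate_le_conjugate ih _
      _ = c ^ w.length • (g i * (g i)ᴴ) := by
          rw [Algebra.algebraMap_eq_smul_one, mul_smul_comm, mul_one, smul_mul_assoc]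
      _ ≤ c ^ w.length • algebraMap ℝ _ c := smul_le_smul_of_nonneg_left (hg i) (by positivity)
      _ = algebraMap ℝ _ (c ^ (i :: w).length) := by
          rw [List.length_cons, pow_succ, map_mul, Algebra.smul_def]

end Words

section Asymptotics

variable {d : ℕ → ℕ}

lemma tendsto_normTrace_mul_mul_zero {v r b : (n : ℕ) → Matrix (Fin (d n)) (Fin (d n)) ℂ}
    {c β : ℝ} (hv : ∀ n, v n * (v n)ᴴ ≤ algebraMap ℝ _ c)
    (hr : Tendsto (fun n => (normTrace (r n * (r n)ᴴ)).re) atTop (𝓝 0))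
    (hb : Tendsto (fun n => (normTrace (b n * (b n)ᴴ)).re) atTop (𝓝 β)) :
    Tendsto (fun n => normTrace (v n * r n * b n)) atTop (𝓝 0) := by
  have hbound := ((tendsto_const_nhds (x := c)).mul hr).mul hb |>.sqrt
  rw [mul_zero, zero_mul, Real.sqrt_zero] at hbound
  refine squeeze_zero_norm (fun n => ?_) hbound
  rw [← abs_norm]
  exact Real.abs_le_sqrt (norm_normTrace_mul_mul_sq_le (hv n))

/-- Replacing the variables one at a time, `P(G) - P(H)` telescopes into terms `V (G i - H i) B`
with `V` a word in the uniformly bounded `H` and `B` a word in `G`. -/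
theorem tendsto_normTrace_evalWord_sub {k : ℕ}
    {G H : (n : ℕ) → Fin k → Matrix (Fin (d n)) (Fin (d n)) ℂ} {c : ℝ} (hc : 0 ≤ c)
    (hG : ∀ n i, (G n i).IsHermitian) (hH : ∀ n i, H n i * (H n i)ᴴ ≤ algebraMap ℝ _ c)
    {L : List (Fin k) → ℂ}
    (hL : ∀ w, Tendsto (fun n => normTrace (evalWord w (G n))) atTop (𝓝 (L w)))
    (hGH : ∀ i, Tendsto (fun n => (normTrace ((G n i - H n i) * (G n i - H n i)ᴴ)).re)
      atTop (𝓝 0))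
    (w : List (Fin k)) :
    Tendsto (fun n => normTrace (evalWord w (G n)) - normTrace (evalWord w (H n)))
      atTop (𝓝 0) := by
  suffices ∀ v, Tendsto (fun n => normTrace (evalWord v (H n) *
      (evalWord w (G n) - evalWord w (H n)))) atTop (𝓝 0) by
    simpa [evalWord_nil, normTrace_sub] using this []
  induction w with
  | nil => simp [evalWord_nil, normTrace]
  | cons i w ih =>
    intro v
    have hsplit : ∀ n, evalWord v (H n) * (evalWord (i :: w) (G n) - evalWord (i :: w) (H n))
        = evalWord v (H n) * (G n i - H n i) * evalWord w (G n)
          + evalWord (v ++ [i]) (H n) * (evalWord w (G n) - evalWord w (H n)) := fun n => by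
      simp only [evalWord_cons, evalWord_append, evalWord_nil, mul_one]
      noncomm_ring
    have hB : Tendsto (fun n => (normTrace (evalWord w (G n) * (evalWord w (G n))ᴴ)).re) atTop
        (𝓝 (L (w ++ w.reverse)).re) := by
      simp_rw [conjTranspose_evalWord (hG _), ← evalWord_append]
      exact (Complex.continuous_re.tendsto _).comp (hL _)
    simpa [hsplit, normTrace_add] using
      (tendsto_normTrace_mul_mul_zero
        (fun n => evalWord_mul_conjTranspose_le hc (hH n) v) (hGH i) hB).add (ih (v ++ [i]))

end Asymptotics

lemma tendsto_zero_of_nonneg_of_forall_le {a m : ℕ → ℝ} {b : ℕ → ℕ → ℝ}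
    (ha : ∀ n, 0 ≤ a n) (hab : ∀ q n, a n ≤ b q n) (hb : ∀ q, Tendsto (b q) atTop (𝓝 (m q)))
    (hm : Tendsto m atTop (𝓝 0)) : Tendsto a atTop (𝓝 0) := by
  refine tendsto_order.2 ⟨fun ε hε => .of_forall fun n => hε.trans_le (ha n), fun ε hε => ?_⟩
  obtain ⟨q, hq⟩ := (hm.eventually (gt_mem_nhds hε)).exists
  exact ((hb q).eventually (gt_mem_nhds hq)).mono fun n hn => (hab q n).trans_lt hn

lemma tendsto_integral_pow_div_pow {μ : Measure ℝ} [IsFiniteMeasure μ] {C : ℝ} (hC : 0 < C)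
    (hμ : ∀ᵐ t ∂μ, |t| < C) :
    Tendsto (fun q : ℕ => (∫ t, t ^ (2 * q + 2) ∂μ) / C ^ (2 * q)) atTop (𝓝 0) := by
  have hF : ∀ q : ℕ, (∫ t, t ^ (2 * q + 2) ∂μ) / C ^ (2 * q)
      = ∫ t, t ^ 2 * (t ^ 2 / C ^ 2) ^ q ∂μ := fun q => by
    rw [← integral_div]
    congr 1 with t
    rw [div_pow, ← pow_mul, ← pow_mul]
    field_simp
    ring
  simp_rw [hF]
  have hlim := tendsto_integral_of_dominated_convergence (μ := μ) (fun _ => C ^ 2)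
    (F := fun (q : ℕ) (t : ℝ) => t ^ 2 * (t ^ 2 / C ^ 2) ^ q) (f := fun _ => 0)
    (fun q => by fun_prop) (integrable_const _) (fun q => hμ.mono fun t ht => ?_)
    (hμ.mono fun t ht => ?_)
  · simpa using hlim
  · have hsq : t ^ 2 < C ^ 2 := by rw [← sq_abs]; gcongr
    have hratio : t ^ 2 / C ^ 2 < 1 := (div_lt_one (by positivity)).2 hsq
    rw [Real.norm_of_nonneg (by positivity)]
    calc t ^ 2 * (t ^ 2 / C ^ 2) ^ q ≤ C ^ 2 * 1 := by
          gcongr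
          exact pow_le_one₀ (by positivity) hratio.le
      _ = C ^ 2 := mul_one _
  · have hsq : t ^ 2 < C ^ 2 := by rw [← sq_abs]; gcongr
    simpa using (tendsto_pow_atTop_nhds_zero_of_lt_one (by positivity)
      ((div_lt_one (by positivity)).2 hsq)).const_mul (t ^ 2)

/-- Comparing with the moment of order `2q + 2` costs a factor `C ^ (2q)`, which the moments of a
measure living in `(-C, C)` beat as `q → ∞`. -/
lemma tendsto_re_normTrace_cfc_mul_self {d : ℕ → ℕ}
    {A : (n : ℕ) → Matrix (Fin (d n)) (Fin (d n)) ℂ} (hA : ∀ n, (A n).IsHermitian)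
    {μ : Measure ℝ} [IsFiniteMeasure μ] {C : ℝ} (hC : 0 < C) (hμ : ∀ᵐ t ∂μ, |t| < C)
    (hmom : ∀ p : ℕ, Tendsto (fun n => (normTrace (A n ^ p)).re) atTop (𝓝 (∫ t, t ^ p ∂μ)))
    {f : ℝ → ℝ} (hf₀ : ∀ t, |t| < C → f t = 0) (hf : ∀ t, |f t| ≤ |t|) :
    Tendsto (fun n => (normTrace (cfc f (A n) * cfc f (A n))).re) atTop (𝓝 0) := by
  have hcont (n : ℕ) (φ : ℝ → ℝ) : ContinuousOn φ (spectrum ℝ (A n)) :=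
    (A n).finite_real_spectrum.continuousOn φ
  have hsq (n : ℕ) : cfc f (A n) * cfc f (A n) = cfc (fun t => f t * f t) (A n) :=
    (cfc_mul f f (A n) (hcont n f) (hcont n f)).symm
  have hpoint (q : ℕ) (t : ℝ) : C ^ (2 * q) * (f t * f t) ≤ t ^ (2 * q + 2) := by
    rcases lt_or_ge |t| C with ht | ht
    · rw [hf₀ t ht, mul_zero, mul_zero]
      exact Even.pow_nonneg ⟨q + 1, by ring⟩ t
    · calc C ^ (2 * q) * (f t * f t) = C ^ (2 * q) * |f t| ^ 2 := by rw [sq_abs, sq]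
        _ ≤ |t| ^ (2 * q) * |t| ^ 2 := mul_le_mul (pow_le_pow_left₀ hC.le ht _)
          (pow_le_pow_left₀ (abs_nonneg _) (hf t) 2) (by positivity) (by positivity)
        _ = t ^ (2 * q + 2) := by rw [← pow_add, Even.pow_abs ⟨q + 1, by ring⟩]
  refine tendsto_zero_of_nonneg_of_forall_le
    (b := fun q n => (normTrace (A n ^ (2 * q + 2))).re / C ^ (2 * q))
    (fun n => ?_) (fun q n => ?_) (fun q => (hmom _).div_const _)
    (tendsto_integral_pow_div_pow hC hμ)
  · rw [hsq]
    exact re_normTrace_nonneg (cfc_nonneg fun t _ => mul_self_nonneg (f t))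
  · rw [le_div_iff₀' (by positivity), hsq, ← re_normTrace_smul, ← cfc_const_mul _ _ _ (hcont n _),
      ← cfc_pow_id (R := ℝ) (A n) _ (hA n).isSelfAdjoint]
    exact re_normTrace_mono (cfc_mono (fun t _ => hpoint q t) (hcont n _) (hcont n _))

theorem stmt2_general (k : ℕ) (C : ℝ) (hC : 0 < C)
    (d : ℕ → ℕ)
    (g : (n : ℕ) → Fin k → Matrix (Fin (d n)) (Fin (d n)) ℂ)
    (hherm : ∀ n i, (g n i).IsHermitian)
    (L : List (Fin k) → ℂ)
    (hL : ∀ w : List (Fin k),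
      Tendsto (fun n => normTrace (evalWord w (g n))) atTop (𝓝 (L w)))
    (μ : Fin k → Measure ℝ) (hprob : ∀ i, IsProbabilityMeasure (μ i))
    (hsupp : ∀ i, ∀ x : ℝ, x ∉ Set.Ioo (-C) C → ∃ U ∈ 𝓝 x, μ i U = 0)
    (hmom : ∀ i (p : ℕ),
      Tendsto (fun n => normTrace (g n i ^ p)) atTop (𝓝 ((∫ t, t ^ p ∂(μ i) : ℝ) : ℂ)))
    (h : ℝ → ℝ) (hh : ∀ t, h t = if |t| < C then t else 0) :
    ∀ w : List (Fin k),
      Tendsto (fun n => normTrace (evalWord w (fun i => (hherm n i).cfc h)))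
        atTop (𝓝 (L w)) := by
  have hμ (i : Fin k) : ∀ᵐ t ∂μ i, |t| < C :=
    Filter.mem_of_superset (μ i).support_mem_ae fun x hx => abs_lt.2 <| by
      by_contra hx'
      exact Measure.notMem_support_iff_exists.2 (hsupp i x hx') hx
  have hbdd (n : ℕ) (i : Fin k) :
      cfc h (g n i) * (cfc h (g n i))ᴴ ≤ algebraMap ℝ _ (C ^ 2) :=
    (hherm n i).cfc_mul_conjTranspose_le fun t => by
      rw [hh]
      split_ifs with ht
      exacts [ht.le, by simpa using hC.le]
  have hsmall (i : Fin k) : Tendsto (fun n =>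
      (normTrace ((g n i - cfc h (g n i)) * (g n i - cfc h (g n i))ᴴ)).re) atTop (𝓝 0) := by
    simp_rw [(hherm _ i).sub_cfc, conjTranspose_cfc]
    have := hprob i
    refine tendsto_re_normTrace_cfc_mul_self (hherm · i) hC (hμ i)
      (fun p => (Complex.continuous_re.tendsto _).comp (hmom i p))
      (fun t ht => by simp [hh, ht]) (fun t => ?_)
    rw [hh]
    split_ifs <;> simp
  intro w
  simp_rw [← (hherm _ _).cfc_eq h]
  simpa using (hL w).sub (tendsto_normTrace_evalWord_sub (sq_nonneg C) hherm hbdd hL hsmall w)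

/-- Truncating an asymptotic matrix model does not change the limiting
`*`-distribution, provided the limiting distribution of each single variable is supported in
`(-C, C)`.  Here `h` is the cut-off function `h(t) = t` for `|t| < C` and `h(t) = 0` otherwise,
and `(hherm n i).cfc h` is the matrix obtained from the Hermitian matrix `g n i` by applying `h`
to its eigenvalues (functional calculus). -/
theorem stmt2 (k : ℕ) (hk : 1 ≤ k) (C : ℝ) (hC : 0 < C)
    (d : ℕ → ℕ) (hd : ∀ n, 0 < d n)
    (g : (n : ℕ) → Fin k → Matrix (Fin (d n)) (Fin (d n)) ℂ)
    (hherm : ∀ n i, (g n i).IsHermitian)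
    (L : List (Fin k) → ℂ)
    (hL : ∀ w : List (Fin k),
      Tendsto (fun n => normTrace (evalWord w (g n))) atTop (𝓝 (L w)))
    (μ : Fin k → Measure ℝ) (hprob : ∀ i, IsProbabilityMeasure (μ i))
    (hsupp : ∀ i, ∀ x : ℝ, x ∉ Set.Ioo (-C) C → ∃ U ∈ 𝓝 x, μ i U = 0)
    (hmom : ∀ i (p : ℕ),
      Tendsto (fun n => normTrace (g n i ^ p)) atTop (𝓝 ((∫ t, t ^ p ∂(μ i) : ℝ) : ℂ)))
    (h : ℝ → ℝ) (hh : ∀ t, h t = if |t| < C then t else 0) :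
    ∀ w : List (Fin k),
      Tendsto (fun n => normTrace (evalWord w (fun i => (hherm n i).cfc h)))
        atTop (𝓝 (L w)) :=
  stmt2_general k C hC d g hherm L hL μ hprob hsupp hmom h hh
end

section
/- Let H be a complex Hilbert space and let p and q be orthogonal projections on H (bounded operators that are self-adjoint and idempotent). If the operator pqp is idempotent (equivalently, pqp is an orthogonal projection), then pq = qp. -/
/-- If `p` and `q` are orthogonal projections on a complex Hilbert space and
`p q p` is idempotent (hence an orthogonal projection), then `p q = q p`. -/
theorem stmt3 {H : Type*} [NormedAddCommGroup H] [InnerProductSpace ℂ H] [CompleteSpace H]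
    (p q : H →L[ℂ] H)
    (hp : IsSelfAdjoint p) (hp2 : p * p = p)
    (hq : IsSelfAdjoint q) (hq2 : q * q = q)
    (h : (p * q * p) * (p * q * p) = p * q * p) :
    p * q = q * p := by
  have hr : q * p - p * q * p = 0 := by
    set r := q * p - p * q * p with hrdef
    have hradj : ContinuousLinearMap.adjoint r = p * q - p * q * p := by
      simp only [hrdef, ← ContinuousLinearMap.star_eq_adjoint, star_sub, star_mul,
        hp.star_eq, hq.star_eq, mul_assoc]
    have hzero : ContinuousLinearMap.adjoint r ∘L r = 0 := by
      have : ContinuousLinearMap.adjoint r ∘L r =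
          ContinuousLinearMap.adjoint r * r := rfl
      rw [this, hradj, hrdef]
      have e1 : p * q * (q * p) = p * q * p := by
        rw [show p * q * (q * p) = p * (q * q) * p by noncomm_ring, hq2]
      have e2 : p * q * (p * q * p) = p * q * p := by
        calc p * q * (p * q * p) = p * q * p * (q * p) := by noncomm_ring
        _ = (p * q * p) * (p * q * p) := by
            rw [show p * q * p * (q * p) = p * q * (p * p) * q * p by rw [hp2]; noncomm_ring]
            noncomm_ring
        _ = p * q * p := h
      have e3 : p * q * p * (q * p) = p * q * p := by
        rw [show p * q * p * (q * p) = p * q * p * q * p by noncomm_ring]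
        have := h
        rw [show (p * q * p) * (p * q * p) = p * q * (p * p) * q * p by noncomm_ring, hp2] at this
        rw [show p * q * p * q * p = p * q * (p * p) * q * p by rw [hp2]] at *
        exact this
      have e4 : p * q * p * (p * q * p) = p * q * p := by
        rw [show p * q * p * (p * q * p) = p * q * (p * p) * q * p by noncomm_ring, hp2,
          show p * q * p * q * p = (p * q * p) * (p * q * p) by rw [show (p*q*p)*(p*q*p) = p*q*(p*p)*q*p by noncomm_ring, hp2]]
        exact h
      calc (p * q - p * q * p) * (q * p - p * q * p)
          = p * q * (q * p) - p * q * (p * q * p) - (p * q * p * (q * p) - p * q * p * (p * q * p)) := by noncomm_ring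
        _ = 0 := by rw [e1, e2, e3, e4]; noncomm_ring
    have : ‖r‖ * ‖r‖ = 0 := by
      rw [← ContinuousLinearMap.norm_adjoint_comp_self, hzero, norm_zero]
    have : ‖r‖ = 0 := by nlinarith [norm_nonneg r]
    exact norm_eq_zero.mp this
  have hqp : q * p = p * q * p := by have := sub_eq_zero.mp hr; exact this
  have hpq : p * q = p * q * p := by
    have := congrArg star hqp
    simpa [star_mul, hp.star_eq, hq.star_eq, mul_assoc] using this
  rw [hpq, hqp]
end

section
/- In the Baby Fock model, for all i, j ∈ I with i ≠ j one has β_i β_j − ε(i,j) β_j β_i = 0 and β_i β_j* − ε(i,j) β_j* β_i = 0. -/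
noncomputable section BabyFock

variable {I : Type*} [Fintype I] [LinearOrder I]

/-- The left creation operator `β_i*` of the Baby Fock model, acting on the Hilbert space with
orthonormal basis `(x_A)_{A ⊆ I}`:  `β_i*(x_A) = (∏_{j ∈ A, j < i} ε i j) • x_{A ∪ {i}}` if
`i ∉ A`, and `β_i*(x_A) = 0` if `i ∈ A`. -/
def crea (ε : I → I → ℂ) (i : I) :
    EuclideanSpace ℂ (Finset I) →L[ℂ] EuclideanSpace ℂ (Finset I) :=
  Matrix.toEuclideanCLM (𝕜 := ℂ)
    (Matrix.of fun B A : Finset I =>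
      if i ∉ A ∧ B = insert i A then ∏ j ∈ A.filter (· < i), ε i j else 0)

/-- The left annihilation operator `β_i` (the adjoint of `β_i*`):
`β_i(x_A) = (∏_{j ∈ A, j < i} ε i j) • x_{A \ {i}}` if `i ∈ A`, and `0` otherwise. -/
def anni (ε : I → I → ℂ) (i : I) :
    EuclideanSpace ℂ (Finset I) →L[ℂ] EuclideanSpace ℂ (Finset I) :=
  Matrix.toEuclideanCLM (𝕜 := ℂ)
    (Matrix.of fun B A : Finset I =>
      if i ∈ A ∧ B = A.erase i then ∏ j ∈ A.filter (· < i), ε i j else 0)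

/-- The right creation operator `α_i*`:
`α_i*(x_A) = (∏_{j ∈ A, j > i} ε i j) • x_{A ∪ {i}}` if `i ∉ A`, and `0` otherwise. -/
def creaR (ε : I → I → ℂ) (i : I) :
    EuclideanSpace ℂ (Finset I) →L[ℂ] EuclideanSpace ℂ (Finset I) :=
  Matrix.toEuclideanCLM (𝕜 := ℂ)
    (Matrix.of fun B A : Finset I =>
      if i ∉ A ∧ B = insert i A then ∏ j ∈ A.filter (i < ·), ε i j else 0)

/-- The right annihilation operator `α_i` (the adjoint of `α_i*`):
`α_i(x_A) = (∏_{j ∈ A, j > i} ε i j) • x_{A \ {i}}` if `i ∈ A`, and `0` otherwise. -/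
def anniR (ε : I → I → ℂ) (i : I) :
    EuclideanSpace ℂ (Finset I) →L[ℂ] EuclideanSpace ℂ (Finset I) :=
  Matrix.toEuclideanCLM (𝕜 := ℂ)
    (Matrix.of fun B A : Finset I =>
      if i ∈ A ∧ B = A.erase i then ∏ j ∈ A.filter (i < ·), ε i j else 0)

end BabyFock

section Aux

variable {I : Type*} [Fintype I] [LinearOrder I]

/-- The product `P_i(A) = ∏_{k ∈ A, k < i} ε(i,k)`. -/
private def bfP (ε : I → I → ℂ) (i : I) (A : Finset I) : ℂ :=
  ∏ k ∈ A.filter (· < i), ε i k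

private lemma bfP_erase (ε : I → I → ℂ) (hsq : ∀ a b, ε a b * ε a b = 1)
    (a b : I) (A : Finset I) (hb : b ∈ A) :
    bfP ε a (A.erase b) = (if b < a then ε a b else 1) * bfP ε a A := by
  unfold bfP
  rw [Finset.filter_erase]
  by_cases h : b < a
  · have hbmem : b ∈ A.filter (· < a) := Finset.mem_filter.2 ⟨hb, h⟩
    rw [if_pos h]
    calc ∏ k ∈ (A.filter (· < a)).erase b, ε a k
        = (ε a b * ε a b) * ∏ k ∈ (A.filter (· < a)).erase b, ε a k := by
          rw [hsq, one_mul]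
      _ = ε a b * ∏ k ∈ A.filter (· < a), ε a k := by
          rw [mul_assoc, Finset.mul_prod_erase _ _ hbmem]
  · rw [if_neg h, one_mul, Finset.erase_eq_of_notMem (by simp [Finset.mem_filter, h])]

private lemma bfP_insert (ε : I → I → ℂ) (a b : I) (A : Finset I) (hb : b ∉ A) :
    bfP ε a (insert b A) = (if b < a then ε a b else 1) * bfP ε a A := by
  unfold bfP
  rw [Finset.filter_insert]
  by_cases h : b < a
  · rw [if_pos h, if_pos h, Finset.prod_insert (by simp [Finset.mem_filter, hb])]
  · rw [if_neg h, if_neg h, one_mul]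

private lemma bf_sign (ε : I → I → ℂ) (hsq : ∀ a b, ε a b * ε a b = 1)
    (hsym : ∀ a b, ε a b = ε b a) (i j : I) (hij : i ≠ j) :
    (if j < i then ε i j else 1) = ε i j * (if i < j then ε j i else 1) := by
  rcases lt_or_gt_of_ne hij with h | h
  · rw [if_neg (not_lt.2 h.le), if_pos h, ← hsym i j, hsq]
  · rw [if_pos h, if_neg (not_lt.2 h.le), mul_one]

private lemma bf_sum_collapse (q : Finset I → Prop) [DecidablePred q]
    (f : Finset I → ℂ) (p : Prop) [Decidable p] (C0 : Finset I) (c : ℂ) :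
    ∑ C : Finset I, (if q C then f C else 0) * (if p ∧ C = C0 then c else 0)
      = if p ∧ q C0 then f C0 * c else 0 := by
  rw [Finset.sum_eq_single C0]
  · split_ifs <;> simp_all
  · intro b _ hb; simp [hb]
  · simp

private lemma bfP_eq (ε : I → I → ℂ) (a : I) (A : Finset I) :
    (∏ k ∈ A.filter (· < a), ε a k) = bfP ε a A := rfl

end Aux

/-- In the Baby Fock model, for all `i ≠ j`:
`β_i β_j − ε(i,j) β_j β_i = 0` and `β_i β_j* − ε(i,j) β_j* β_i = 0`. -/
theorem stmt6 {I : Type*} [Fintype I] [LinearOrder I] (ε : I → I → ℂ)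
    (hval : ∀ i j, ε i j = 1 ∨ ε i j = -1)
    (hsym : ∀ i j, ε i j = ε j i)
    (hdiag : ∀ i, ε i i = -1)
    (i j : I) (hij : i ≠ j) :
    anni ε i * anni ε j - ε i j • (anni ε j * anni ε i) = 0 ∧
      anni ε i * crea ε j - ε i j • (crea ε j * anni ε i) = 0 := by
  classical
  have hsq : ∀ a b, ε a b * ε a b = 1 := fun a b => by
    rcases hval a b with h | h <;> simp [h]
  have trans : ∀ M N : Matrix (Finset I) (Finset I) ℂ,
      M * N - ε i j • (N * M) = 0 →
      (Matrix.toEuclideanCLM (𝕜 := ℂ) M) * (Matrix.toEuclideanCLM (𝕜 := ℂ) N)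
        - ε i j • ((Matrix.toEuclideanCLM (𝕜 := ℂ) N) * (Matrix.toEuclideanCLM (𝕜 := ℂ) M))
          = 0 := by
    intro M N h
    rw [← map_mul, ← map_mul, ← map_smul, ← map_sub, h, map_zero]
  constructor
  · unfold anni
    apply trans
    ext B A
    simp only [Matrix.sub_apply, Matrix.smul_apply, Matrix.mul_apply, Matrix.of_apply,
      Matrix.zero_apply, smul_eq_mul]
    simp only [bfP_eq]
    rw [bf_sum_collapse (fun C => i ∈ C ∧ B = C.erase i) (bfP ε i) (j ∈ A) (A.erase j)
        (bfP ε j A),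
      bf_sum_collapse (fun C => j ∈ C ∧ B = C.erase j) (bfP ε j) (i ∈ A) (A.erase i)
        (bfP ε i A)]
    have hc1 : (j ∈ A ∧ i ∈ A.erase j ∧ B = (A.erase j).erase i) ↔
        (i ∈ A ∧ j ∈ A ∧ B = (A.erase j).erase i) := by
      simp only [Finset.mem_erase]
      constructor
      · rintro ⟨h1, ⟨_, h2⟩, h3⟩; exact ⟨h2, h1, h3⟩
      · rintro ⟨h1, h2, h3⟩; exact ⟨h2, ⟨hij, h1⟩, h3⟩
    have hc2 : (i ∈ A ∧ j ∈ A.erase i ∧ B = (A.erase i).erase j) ↔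
        (i ∈ A ∧ j ∈ A ∧ B = (A.erase j).erase i) := by
      rw [Finset.erase_right_comm]
      simp only [Finset.mem_erase]
      constructor
      · rintro ⟨h1, ⟨_, h2⟩, h3⟩; exact ⟨h1, h2, h3⟩
      · rintro ⟨h1, h2, h3⟩; exact ⟨h1, ⟨hij.symm, h2⟩, h3⟩
    rw [if_congr hc1 rfl rfl, if_congr hc2 rfl rfl]
    by_cases h : i ∈ A ∧ j ∈ A ∧ B = (A.erase j).erase i
    · rw [if_pos h, if_pos h, bfP_erase ε hsq i j A h.2.1, bfP_erase ε hsq j i A h.1,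
        bf_sign ε hsq hsym i j hij]
      ring
    · rw [if_neg h, if_neg h]; ring
  · unfold anni crea
    apply trans
    ext B A
    simp only [Matrix.sub_apply, Matrix.smul_apply, Matrix.mul_apply, Matrix.of_apply,
      Matrix.zero_apply, smul_eq_mul]
    simp only [bfP_eq]
    rw [bf_sum_collapse (fun C => i ∈ C ∧ B = C.erase i) (bfP ε i) (j ∉ A) (insert j A)
        (bfP ε j A),
      bf_sum_collapse (fun C => j ∉ C ∧ B = insert j C) (bfP ε j) (i ∈ A) (A.erase i)
        (bfP ε i A)]
    have hc1 : (j ∉ A ∧ i ∈ insert j A ∧ B = (insert j A).erase i) ↔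
        (i ∈ A ∧ j ∉ A ∧ B = insert j (A.erase i)) := by
      rw [Finset.erase_insert_of_ne hij.symm]
      simp only [Finset.mem_insert]
      constructor
      · rintro ⟨h1, h2 | h2, h3⟩
        · exact absurd h2 hij
        · exact ⟨h2, h1, h3⟩
      · rintro ⟨h1, h2, h3⟩; exact ⟨h2, Or.inr h1, h3⟩
    have hc2 : (i ∈ A ∧ j ∉ A.erase i ∧ B = insert j (A.erase i)) ↔
        (i ∈ A ∧ j ∉ A ∧ B = insert j (A.erase i)) := by
      simp only [Finset.mem_erase, not_and]
      constructor
      · rintro ⟨h1, h2, h3⟩; exact ⟨h1, fun hjA => h2 hij.symm hjA, h3⟩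
      · rintro ⟨h1, h2, h3⟩; exact ⟨h1, fun _ hjA => h2 hjA, h3⟩
    rw [if_congr hc1 rfl rfl, if_congr hc2 rfl rfl]
    by_cases h : i ∈ A ∧ j ∉ A ∧ B = insert j (A.erase i)
    · rw [if_pos h, if_pos h, bfP_insert ε i j A h.2.1, bfP_erase ε hsq j i A h.1,
        bf_sign ε hsq hsym i j hij]
      ring
    · rw [if_neg h, if_neg h]; ring
end

section
/- In the twisted Baby Fock model with generalized semi-circular operators γ_j = μ_j^{−1} β_j* + μ_j β_{−j}: (a) for all i, j ∈ {1, …, k} with i ≠ j, γ_i γ_j − ε(i,j) γ_j γ_i = 0 and γ_i* γ_j − ε(i,j) γ_j γ_i* = 0; (b) for every i ∈ {1, …, k}, γ_i² = 0 and (γ_i*)² = 0; (c) for every i ∈ {1, …, k}, γ_i* γ_i + γ_i γ_i* = (μ_i² + μ_i^{−2})·Id. -/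
noncomputable section

/-- The index set `I = {−k, …, −1} ∪ {1, …, k}` of the twisted Baby Fock model, as a subtype
of `ℤ`, with its natural linear order. -/
abbrev Ik (k : ℕ) : Type := {i : ℤ // i ∈ (Finset.Icc (-(k : ℤ)) (k : ℤ)).erase 0}

/-- The map `i ↦ -i` on the index set. -/
def negI {k : ℕ} (i : Ik k) : Ik k :=
  ⟨-i.1, by
    have h := i.2
    simp only [Finset.mem_erase, Finset.mem_Icc] at h ⊢
    omega⟩

/-- The map `i ↦ |i|` on the index set. -/
def absI {k : ℕ} (i : Ik k) : Ik k :=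
  ⟨|i.1|, by
    have h := i.2
    simp only [Finset.mem_erase, Finset.mem_Icc] at h ⊢
    rcases abs_cases i.1 with h' | h' <;> omega⟩

/-- For `j ∈ {1, …, k}` (encoded as `j : Fin k`), the corresponding positive element of the
index set. -/
def posIdx {k : ℕ} (j : Fin k) : Ik k :=
  ⟨(j : ℤ) + 1, by
    have h := j.isLt
    simp only [Finset.mem_erase, Finset.mem_Icc]
    omega⟩

/-- The generalized semi-circular operator `γ_j = μ_j⁻¹ β_j* + μ_j β_{−j}` of the twisted
Baby Fock model, for `j ∈ {1, …, k}`. -/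
def gam {k : ℕ} (ε : Ik k → Ik k → ℂ) (μ : Fin k → ℝ) (j : Fin k) :
    EuclideanSpace ℂ (Finset (Ik k)) →L[ℂ] EuclideanSpace ℂ (Finset (Ik k)) :=
  ((μ j : ℂ))⁻¹ • crea ε (posIdx j) + (μ j : ℂ) • anni ε (negI (posIdx j))

end

/-!
Write `[x, y]_e = x y - e • y x`. The left creation and annihilation operators satisfy the twisted
canonical anticommutation relations `[β_i*, β_j*]_{ε(i,j)} = [β_i, β_j]_{ε(i,j)} = 0` and
`[β_i, β_j*]_{ε(i,j)} = [β_i*, β_j]_{ε(i,j)} = δ_ij`.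
For `i ≠ j` both sides act on a basis vector `x_A` as multiples of one basis vector, and the signs
agree because the sign picked up by inserting `j` before `i`, times the one for inserting `i` before
`j`, is `ε(i,j)`; for `i = j`, `ε(i,i) = -1` turns `[·,·]_{ε(i,i)}` into the anticommutator.

In the twisted setting `ε(±i, ±j) = ε(i,j)` and `i ≠ -j`, so expanding `γ_i` and `γ_j`
bilinearly gives `[γ_i, γ_j]_{ε(i,j)} = 0` and
`[γ_i*, γ_j]_{ε(i,j)} = δ_ij (μ_i² + μ_i⁻²)`.
Part (a) is the case `i ≠ j`; for `i = j` the first relation reads `2 γ_i² = 0`, giving (b),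
and the second one is (c).
-/

noncomputable section

section EpsCommutator

variable {R A : Type*} [CommRing R] [Ring A] [Algebra R A]

def epsComm (e : R) (x y : A) : A := x * y - e • (y * x)

lemma epsComm_neg_one (x y : A) : epsComm (-1 : R) x y = x * y + y * x := by
  simp [epsComm]

lemma epsComm_smul_add_smul (e a b c d : R) (x₁ x₂ y₁ y₂ : A) :
    epsComm e (a • x₁ + b • x₂) (c • y₁ + d • y₂) =
      (a * c) • epsComm e x₁ y₁ + (a * d) • epsComm e x₁ y₂ +
        (b * c) • epsComm e x₂ y₁ + (b * d) • epsComm e x₂ y₂ := by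
  simp only [epsComm, add_mul, mul_add, smul_mul_smul_comm, smul_sub, smul_add, smul_smul]
  module

lemma epsComm_swap {e : R} (he : e * e = 1) (x y : A) : epsComm e y x = -e • epsComm e x y := by
  rw [epsComm, epsComm, smul_sub, smul_smul, neg_mul, he, neg_smul, neg_smul, one_smul]
  abel

lemma star_epsComm [StarRing R] [StarRing A] [StarModule R A] (e : R) (x y : A) :
    star (epsComm e x y) = epsComm (star e) (star y) (star x) := by
  simp [epsComm, star_sub, star_mul, star_smul]

lemma map_epsComm {B F : Type*} [Ring B] [Algebra R B] [FunLike F A B] [AlgHomClass F R A B]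
    (f : F) (e : R) (x y : A) : f (epsComm e x y) = epsComm e (f x) (f y) := by
  simp [epsComm, map_sub, map_mul, map_smul]

end EpsCommutator

lemma star_eq_self_of_eq_one_or_eq_neg_one {z : ℂ} (hz : z = 1 ∨ z = -1) : star z = z := by
  rcases hz with rfl | rfl <;> simp

section BabyFockRelations

open Matrix

variable {I : Type*} [LinearOrder I] (ε : I → I → ℂ)

def leftSign (i : I) (A : Finset I) : ℂ := ∏ j ∈ A.filter (· < i), ε i j

def crossSign (i j : I) : ℂ := if j < i then ε i j else 1

def creaMat (i : I) : Matrix (Finset I) (Finset I) ℂ :=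
  of fun B A => if i ∉ A ∧ B = insert i A then leftSign ε i A else 0

def anniMat (i : I) : Matrix (Finset I) (Finset I) ℂ :=
  of fun B A => if i ∈ A ∧ B = A.erase i then leftSign ε i A else 0

lemma crea_eq_toEuclideanCLM [Fintype I] (i : I) :
    crea ε i = toEuclideanCLM (𝕜 := ℂ) (creaMat ε i) := rfl

lemma anni_eq_toEuclideanCLM [Fintype I] (i : I) :
    anni ε i = toEuclideanCLM (𝕜 := ℂ) (anniMat ε i) := rfl

variable {ε}

lemma leftSign_insert {j : I} {A : Finset I} (hj : j ∉ A) (i : I) :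
    leftSign ε i (insert j A) = crossSign ε i j * leftSign ε i A := by
  rw [leftSign, Finset.filter_insert, crossSign]
  split_ifs
  · rw [Finset.prod_insert (by simp [hj]), leftSign]
  · rw [one_mul, leftSign]

lemma leftSign_of_mem {j : I} {A : Finset I} (hj : j ∈ A) (i : I) :
    leftSign ε i A = crossSign ε i j * leftSign ε i (A.erase j) := by
  rw [← leftSign_insert (Finset.notMem_erase j A), Finset.insert_erase hj]

lemma leftSign_insert_self (i : I) (A : Finset I) :
    leftSign ε i (insert i A) = leftSign ε i A := by
  rw [leftSign, leftSign, Finset.filter_insert, if_neg (lt_irrefl i)]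

lemma leftSign_erase_self (i : I) (A : Finset I) : leftSign ε i (A.erase i) = leftSign ε i A := by
  rw [leftSign, leftSign, Finset.filter_erase, Finset.erase_eq_of_notMem (by simp)]

section Sign

variable (hval : ∀ i j, ε i j = 1 ∨ ε i j = -1)
include hval

lemma leftSign_mul_self (i : I) (A : Finset I) : leftSign ε i A * leftSign ε i A = 1 := by
  rw [leftSign, ← Finset.prod_mul_distrib]
  exact Finset.prod_eq_one fun j _ => mul_self_eq_one_iff.mpr (hval i j)

lemma star_leftSign (i : I) (A : Finset I) : star (leftSign ε i A) = leftSign ε i A := by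
  rw [leftSign, star_prod]
  exact Finset.prod_congr rfl fun j _ => star_eq_self_of_eq_one_or_eq_neg_one (hval i j)

lemma crossSign_mul_self (i j : I) : crossSign ε i j * crossSign ε i j = 1 := by
  rw [crossSign]
  split_ifs
  exacts [mul_self_eq_one_iff.mpr (hval i j), mul_one 1]

omit hval in
lemma crossSign_mul_crossSign (hsym : ∀ i j, ε i j = ε j i) {i j : I} (hij : i ≠ j) :
    crossSign ε i j * crossSign ε j i = ε i j := by
  rcases hij.lt_or_gt with h | h
  · rw [crossSign, crossSign, if_neg h.not_gt, if_pos h, one_mul, hsym]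
  · rw [crossSign, crossSign, if_pos h, if_neg h.not_gt, mul_one]

end Sign

lemma conjTranspose_creaMat (hval : ∀ i j, ε i j = 1 ∨ ε i j = -1) (i : I) :
    (creaMat ε i)ᴴ = anniMat ε i := by
  ext B A
  simp only [conjTranspose_apply, creaMat, anniMat, of_apply]
  by_cases h : i ∈ A ∧ B = A.erase i
  · obtain ⟨hi, rfl⟩ := h
    rw [if_pos ⟨Finset.notMem_erase i A, (Finset.insert_erase hi).symm⟩, if_pos ⟨hi, rfl⟩,
      star_leftSign hval, leftSign_erase_self]
  · rw [if_neg h, if_neg, star_zero]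
    rintro ⟨hiB, rfl⟩
    exact h ⟨Finset.mem_insert_self i B, (Finset.erase_insert hiB).symm⟩

variable [Fintype I]

lemma creaMat_mulVec_single (i : I) (A : Finset I) :
    creaMat ε i *ᵥ Pi.single A 1 =
      if i ∈ A then 0 else leftSign ε i A • Pi.single (insert i A) 1 := by
  ext B
  rw [mulVec_single_one]
  split_ifs with h <;> simp [creaMat, h, Pi.single_apply, eq_comm]

lemma anniMat_mulVec_single (i : I) (A : Finset I) :
    anniMat ε i *ᵥ Pi.single A 1 =
      if i ∈ A then leftSign ε i A • Pi.single (A.erase i) 1 else 0 := by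
  ext B
  rw [mulVec_single_one]
  split_ifs with h <;> simp [anniMat, h, Pi.single_apply, eq_comm]

lemma epsComm_creaMat (hval : ∀ i j, ε i j = 1 ∨ ε i j = -1) (hsym : ∀ i j, ε i j = ε j i)
    (i j : I) : epsComm (ε i j) (creaMat ε i) (creaMat ε j) = 0 := by
  refine ext_of_mulVec_single fun A => ?_
  rw [epsComm, sub_mulVec, smul_mulVec, ← mulVec_mulVec, ← mulVec_mulVec, zero_mulVec]
  obtain rfl | hij := eq_or_ne i j
  · by_cases hi : i ∈ A <;> simp [-mulVec_single, creaMat_mulVec_single, mulVec_smul, hi]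
  by_cases hi : i ∈ A
  · by_cases hj : j ∈ A <;> simp [-mulVec_single, creaMat_mulVec_single, mulVec_smul, hi, hj]
  by_cases hj : j ∈ A
  · simp [-mulVec_single, creaMat_mulVec_single, mulVec_smul, hi, hj]
  simp only [creaMat_mulVec_single, hi, hj, hij, hij.symm, ↓reduceIte, mulVec_smul,
    Finset.mem_insert, or_self, not_false_eq_true, leftSign_insert, Finset.insert_comm i j,
    smul_smul, ← sub_smul, smul_eq_zero, Pi.single_eq_zero_iff, one_ne_zero, or_false]
  linear_combination
    leftSign ε i A * leftSign ε j A * crossSign ε j i * crossSign_mul_crossSign hsym hij -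
      leftSign ε i A * leftSign ε j A * crossSign ε i j * crossSign_mul_self hval j i

lemma anniMat_mul_creaMat_add_creaMat_mul_anniMat (hval : ∀ i j, ε i j = 1 ∨ ε i j = -1)
    (i : I) : anniMat ε i * creaMat ε i + creaMat ε i * anniMat ε i = 1 := by
  refine ext_of_mulVec_single fun A => ?_
  rw [add_mulVec, ← mulVec_mulVec, ← mulVec_mulVec, one_mulVec]
  by_cases hi : i ∈ A
  · simp [-mulVec_single, creaMat_mulVec_single, anniMat_mulVec_single, mulVec_smul, hi, smul_smul,
      leftSign_erase_self, leftSign_mul_self hval, Finset.insert_erase]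
  · simp [-mulVec_single, creaMat_mulVec_single, anniMat_mulVec_single, mulVec_smul, hi, smul_smul,
      leftSign_insert_self, leftSign_mul_self hval]

lemma epsComm_anniMat_creaMat_of_ne (hsym : ∀ i j, ε i j = ε j i) {i j : I} (hij : i ≠ j) :
    epsComm (ε i j) (anniMat ε i) (creaMat ε j) = 0 := by
  refine ext_of_mulVec_single fun A => ?_
  rw [epsComm, sub_mulVec, smul_mulVec, ← mulVec_mulVec, ← mulVec_mulVec, zero_mulVec]
  by_cases hj : j ∈ A
  · by_cases hi : i ∈ A <;>
      simp [-mulVec_single, creaMat_mulVec_single, anniMat_mulVec_single, mulVec_smul, hi, hj,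
        hij.symm]
  by_cases hi : i ∈ A
  · simp only [creaMat_mulVec_single, anniMat_mulVec_single, hi, hj, hij, hij.symm, ↓reduceIte,
      leftSign_of_mem hi j, mulVec_smul, Finset.mem_insert, or_true, not_false_eq_true,
      leftSign_insert, Finset.erase_insert_of_ne hij.symm, smul_smul, Finset.mem_erase, ne_eq,
      and_false, ← sub_smul, smul_eq_zero, Pi.single_eq_zero_iff, one_ne_zero, or_false]
    linear_combination
      leftSign ε i A * leftSign ε j (A.erase i) * crossSign_mul_crossSign hsym hij
  · simp [-mulVec_single, creaMat_mulVec_single, anniMat_mulVec_single, mulVec_smul, hi, hj, hij]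

lemma epsComm_anniMat_creaMat (hval : ∀ i j, ε i j = 1 ∨ ε i j = -1)
    (hsym : ∀ i j, ε i j = ε j i) (hdiag : ∀ i, ε i i = -1) (i j : I) :
    epsComm (ε i j) (anniMat ε i) (creaMat ε j) = if i = j then 1 else 0 := by
  obtain rfl | hij := eq_or_ne i j
  · rw [if_pos rfl, hdiag, epsComm_neg_one, anniMat_mul_creaMat_add_creaMat_mul_anniMat hval]
  · rw [if_neg hij, epsComm_anniMat_creaMat_of_ne hsym hij]

lemma epsComm_anniMat (hval : ∀ i j, ε i j = 1 ∨ ε i j = -1) (hsym : ∀ i j, ε i j = ε j i)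
    (i j : I) : epsComm (ε i j) (anniMat ε i) (anniMat ε j) = 0 := by
  have h := congrArg star (epsComm_creaMat hval hsym j i)
  rwa [star_epsComm, star_eq_conjTranspose, star_eq_conjTranspose, conjTranspose_creaMat hval,
    conjTranspose_creaMat hval, star_eq_self_of_eq_one_or_eq_neg_one (hval j i), hsym,
    star_zero] at h

section Operators

variable (hval : ∀ i j, ε i j = 1 ∨ ε i j = -1) (hsym : ∀ i j, ε i j = ε j i)
include hval

lemma star_crea (i : I) : star (crea ε i) = anni ε i := by
  rw [crea_eq_toEuclideanCLM, anni_eq_toEuclideanCLM, ← map_star, Matrix.star_eq_conjTranspose,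
    conjTranspose_creaMat hval]

lemma star_anni (i : I) : star (anni ε i) = crea ε i := by
  rw [← star_crea hval, star_star]

include hsym

lemma epsComm_crea_crea (i j : I) : epsComm (ε i j) (crea ε i) (crea ε j) = 0 := by
  rw [crea_eq_toEuclideanCLM, crea_eq_toEuclideanCLM, ← map_epsComm, epsComm_creaMat hval hsym,
    map_zero]

lemma epsComm_anni_anni (i j : I) : epsComm (ε i j) (anni ε i) (anni ε j) = 0 := by
  rw [anni_eq_toEuclideanCLM, anni_eq_toEuclideanCLM, ← map_epsComm, epsComm_anniMat hval hsym,
    map_zero]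

variable (hdiag : ∀ i, ε i i = -1)
include hdiag

lemma epsComm_anni_crea (i j : I) :
    epsComm (ε i j) (anni ε i) (crea ε j) = if i = j then 1 else 0 := by
  rw [anni_eq_toEuclideanCLM, crea_eq_toEuclideanCLM, ← map_epsComm,
    epsComm_anniMat_creaMat hval hsym hdiag]
  split_ifs <;> simp

lemma epsComm_crea_anni (i j : I) :
    epsComm (ε i j) (crea ε i) (anni ε j) = if i = j then 1 else 0 := by
  rw [hsym, epsComm_swap (mul_self_eq_one_iff.mpr (hval j i)),
    epsComm_anni_crea hval hsym hdiag]
  obtain rfl | hij := eq_or_ne i j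
  · simp [hdiag]
  · simp [hij, Ne.symm hij]

end Operators

end BabyFockRelations

section TwistedModel

variable {k : ℕ}

lemma posIdx_injective : Function.Injective (posIdx (k := k)) := by
  intro i j h
  have h' : (i : ℤ) + 1 = j + 1 := congrArg Subtype.val h
  exact Fin.ext (by omega)

lemma posIdx_ne_negI (i j : Fin k) : posIdx i ≠ negI (posIdx j) := by
  intro h
  have h' : (i : ℤ) + 1 = -((j : ℤ) + 1) := congrArg Subtype.val h
  omega

lemma negI_inj {a b : Ik k} : negI a = negI b ↔ a = b :=
  ⟨fun h => Subtype.ext (neg_inj.mp (congrArg Subtype.val h)), congrArg negI⟩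

lemma absI_negI (a : Ik k) : absI (negI a) = absI a := Subtype.ext (abs_neg a.1)

variable {ε : Ik k → Ik k → ℂ} (htw : ∀ i j, ε i j = ε (absI i) (absI j))
include htw

lemma eps_negI_left (a b : Ik k) : ε (negI a) b = ε a b := by
  rw [htw, absI_negI, ← htw]

lemma eps_negI_right (a b : Ik k) : ε a (negI b) = ε a b := by
  rw [htw, absI_negI, ← htw]

end TwistedModel

section SemicircularOperators

variable {k : ℕ} {ε : Ik k → Ik k → ℂ} (μ : Fin k → ℝ)
  (hval : ∀ i j, ε i j = 1 ∨ ε i j = -1) (hsym : ∀ i j, ε i j = ε j i)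
  (hdiag : ∀ i, ε i i = -1) (htw : ∀ i j, ε i j = ε (absI i) (absI j))
include hval

lemma star_gam (j : Fin k) :
    star (gam ε μ j) =
      (μ j : ℂ)⁻¹ • anni ε (posIdx j) + (μ j : ℂ) • crea ε (negI (posIdx j)) := by
  -- `rw [star_add]` only matches the operator `star` once its arguments are given explicitly.
  rw [gam,
    star_add ((μ j : ℂ)⁻¹ • crea ε (posIdx j)) ((μ j : ℂ) • anni ε (negI _)),
    star_smul, star_smul, star_crea hval, star_anni hval, star_inv₀, Complex.star_def,
    Complex.conj_ofReal]

include hsym hdiag htw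

lemma epsComm_gam_gam (i j : Fin k) :
    epsComm (ε (posIdx i) (posIdx j)) (gam ε μ i) (gam ε μ j) = 0 := by
  have hcc := epsComm_crea_crea hval hsym (posIdx i) (posIdx j)
  have hca := epsComm_crea_anni hval hsym hdiag (posIdx i) (negI (posIdx j))
  have hac := epsComm_anni_crea hval hsym hdiag (negI (posIdx i)) (posIdx j)
  have haa := epsComm_anni_anni hval hsym (negI (posIdx i)) (negI (posIdx j))
  rw [eps_negI_right htw, if_neg (posIdx_ne_negI i j)] at hca
  rw [eps_negI_left htw, if_neg (posIdx_ne_negI j i).symm] at hac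
  rw [eps_negI_left htw, eps_negI_right htw] at haa
  rw [gam, gam, epsComm_smul_add_smul, hcc, hca, hac, haa]
  simp

lemma epsComm_star_gam_gam (i j : Fin k) :
    epsComm (ε (posIdx i) (posIdx j)) (star (gam ε μ i)) (gam ε μ j) =
      if i = j then ((μ i : ℂ) ^ (2 : ℤ) + (μ i : ℂ) ^ (-2 : ℤ)) • 1 else 0 := by
  have hac := epsComm_anni_crea hval hsym hdiag (posIdx i) (posIdx j)
  have haa := epsComm_anni_anni hval hsym (posIdx i) (negI (posIdx j))
  have hcc := epsComm_crea_crea hval hsym (negI (posIdx i)) (posIdx j)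
  have hca := epsComm_crea_anni hval hsym hdiag (negI (posIdx i)) (negI (posIdx j))
  simp only [posIdx_injective.eq_iff] at hac
  rw [eps_negI_right htw] at haa
  rw [eps_negI_left htw] at hcc
  rw [eps_negI_left htw, eps_negI_right htw] at hca
  simp only [negI_inj, posIdx_injective.eq_iff] at hca
  rw [star_gam μ hval, gam, epsComm_smul_add_smul, hac, haa, hcc, hca]
  split_ifs with h
  · subst h
    rw [zpow_neg, zpow_two]
    module
  · simp

end SemicircularOperators

end

theorem stmt9_general (k : ℕ) (ε : Ik k → Ik k → ℂ)
    (hval : ∀ i j, ε i j = 1 ∨ ε i j = -1)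
    (hsym : ∀ i j, ε i j = ε j i)
    (hdiag : ∀ i, ε i i = -1)
    (htw : ∀ i j, ε i j = ε (absI i) (absI j))
    (μ : Fin k → ℝ) :
    (∀ i j : Fin k, i ≠ j →
      gam ε μ i * gam ε μ j - ε (posIdx i) (posIdx j) • (gam ε μ j * gam ε μ i) = 0 ∧
      star (gam ε μ i) * gam ε μ j
        - ε (posIdx i) (posIdx j) • (gam ε μ j * star (gam ε μ i)) = 0) ∧
    (∀ i : Fin k, gam ε μ i * gam ε μ i = 0 ∧ star (gam ε μ i) * star (gam ε μ i) = 0) ∧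
    (∀ i : Fin k, star (gam ε μ i) * gam ε μ i + gam ε μ i * star (gam ε μ i) =
      ((μ i : ℂ) ^ (2 : ℤ) + (μ i : ℂ) ^ (-2 : ℤ)) • 1) := by
  have hsq (i : Fin k) : gam ε μ i * gam ε μ i = 0 := by
    have h := epsComm_gam_gam μ hval hsym hdiag htw i i
    rw [hdiag, epsComm_neg_one, ← two_smul ℂ] at h
    exact (smul_eq_zero.mp h).resolve_left two_ne_zero
  refine ⟨fun i j hij => ⟨epsComm_gam_gam μ hval hsym hdiag htw i j, ?_⟩,
    fun i => ⟨hsq i, ?_⟩, fun i => ?_⟩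
  · exact (epsComm_star_gam_gam μ hval hsym hdiag htw i j).trans (if_neg hij)
  · rw [← star_mul, hsq, ContinuousLinearMap.star_eq_adjoint, map_zero]
  · have h := epsComm_star_gam_gam μ hval hsym hdiag htw i i
    rwa [if_pos rfl, hdiag, epsComm_neg_one] at h

/-- Commutation relations for the generalized semi-circular operators
`γ_j = μ_j⁻¹ β_j* + μ_j β_{−j}` of the twisted Baby Fock model:
(a) for `i ≠ j`, `γ_i γ_j = ε(i,j) γ_j γ_i` and `γ_i* γ_j = ε(i,j) γ_j γ_i*`;
(b) `γ_i² = (γ_i*)² = 0`;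
(c) `γ_i* γ_i + γ_i γ_i* = (μ_i² + μ_i⁻²)·Id`. -/
theorem stmt9 (k : ℕ) (hk : 1 ≤ k) (ε : Ik k → Ik k → ℂ)
    (hval : ∀ i j, ε i j = 1 ∨ ε i j = -1)
    (hsym : ∀ i j, ε i j = ε j i)
    (hdiag : ∀ i, ε i i = -1)
    (htw : ∀ i j, ε i j = ε (absI i) (absI j))
    (μ : Fin k → ℝ) (hμ : ∀ j, 1 ≤ μ j) :
    (∀ i j : Fin k, i ≠ j →
      gam ε μ i * gam ε μ j - ε (posIdx i) (posIdx j) • (gam ε μ j * gam ε μ i) = 0 ∧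
      star (gam ε μ i) * gam ε μ j
        - ε (posIdx i) (posIdx j) • (gam ε μ j * star (gam ε μ i)) = 0) ∧
    (∀ i : Fin k, gam ε μ i * gam ε μ i = 0 ∧ star (gam ε μ i) * star (gam ε μ i) = 0) ∧
    (∀ i : Fin k, star (gam ε μ i) * gam ε μ i + gam ε μ i * star (gam ε μ i) =
      ((μ i : ℂ) ^ (2 : ℤ) + (μ i : ℂ) ^ (-2 : ℤ)) • 1) :=
  stmt9_general k ε hval hsym hdiag htw μ
end

section
/- For an integer n ≥ 2 define g_n : ℝ → ℝ by g_n(t) = 1 for t ∈ (1, 1 + 2^{−n}), g_n(t) = k/2^n for t ∈ [k/2^n, (k+1)/2^n) with k an integer satisfying 2^n + 1 ≤ k ≤ n·2^n − 1, g_n(t) = n for t ≥ n, and g_n(t) = 0 otherwise; define f_n : (0, ∞) → (0, ∞) by f_n(t) = g_n(t) for t > 1, f_n(1) = 1, and f_n(t) = 1/g_n(1/t) for 0 < t < 1. Then: (a) for every t ≥ 1 and every n ≥ 2, 1 ≤ f_n(t) ≤ f_{n+1}(t) ≤ t and lim_{n→∞} f_n(t) = t; (b) for every t > 0 and every n ≥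 2, f_n(t) = 1/f_n(1/t). -/
open Filter Topology

/-- The step function
`g_n = χ_{(1, 1+2^{−n})} + ∑_{k=2^n+1}^{n·2^n−1} (k/2^n)·χ_{[k/2^n, (k+1)/2^n)} + n·χ_{[n,∞)}`. -/
noncomputable def gfun (n : ℕ) (t : ℝ) : ℝ :=
  (if t ∈ Set.Ioo (1 : ℝ) (1 + 2 ^ (-(n : ℤ))) then 1 else 0) +
    (∑ k ∈ Finset.Icc (2 ^ n + 1) (n * 2 ^ n - 1),
      if t ∈ Set.Ico ((k : ℝ) / 2 ^ n) (((k : ℝ) + 1) / 2 ^ n) then (k : ℝ) / 2 ^ n else 0) +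
    (if t ∈ Set.Ici (n : ℝ) then (n : ℝ) else 0)

/-- The discretization `f_n(t) = g_n(t)` for `t > 1`, `f_n(1) = 1`, and `f_n(t) = 1/g_n(1/t)`
for `0 < t < 1`. -/
noncomputable def ffun (n : ℕ) (t : ℝ) : ℝ :=
  if 1 < t then gfun n t else if t < 1 then 1 / gfun n (1 / t) else 1

lemma gfun_eq (n : ℕ) (hn : 2 ≤ n) (t : ℝ) (ht : 1 < t) :
    gfun n t = min ((⌊(2:ℝ) ^ n * t⌋ : ℝ) / 2 ^ n) n := by
  have hP : (0:ℝ) < 2 ^ n := by positivity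
  have hPinv : (2:ℝ) ^ n * (2 ^ n)⁻¹ = 1 := mul_inv_cancel₀ hP.ne'
  have hzp : (2:ℝ) ^ (-(n:ℤ)) = (2 ^ n)⁻¹ := by
    rw [zpow_neg, zpow_natCast]
  have h2n : (1:ℝ) ≤ 2 ^ n := one_le_pow₀ (by norm_num)
  set m := ⌊(2:ℝ) ^ n * t⌋ with hm
  have hm1 : (m:ℝ) ≤ 2 ^ n * t := Int.floor_le _
  have hm2 : 2 ^ n * t < m + 1 := Int.lt_floor_add_one _
  have hm0 : (2:ℤ) ^ n ≤ m := by
    apply Int.le_floor.mpr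
    push_cast
    nlinarith
  have hm0' : (0:ℤ) ≤ m := le_trans (by positivity) hm0
  have hn2 : (2:ℝ) ≤ n := by exact_mod_cast hn
  rcases lt_or_ge t (1 + ((2:ℝ) ^ n)⁻¹) with hA | hB'
  · -- case 1 < t < 1 + 2⁻ⁿ
    have h1 : t ∈ Set.Ioo (1:ℝ) (1 + 2 ^ (-(n:ℤ))) := by rw [hzp]; exact ⟨ht, hA⟩
    have h3 : t ∉ Set.Ici (n:ℝ) := by
      simp only [Set.mem_Ici, not_le]
      have : ((2:ℝ) ^ n)⁻¹ ≤ 1 := by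
        rw [inv_le_one_iff₀]; right; exact h2n
      linarith
    have hsum : (∑ k ∈ Finset.Icc (2 ^ n + 1) (n * 2 ^ n - 1),
        if t ∈ Set.Ico ((k : ℝ) / 2 ^ n) (((k : ℝ) + 1) / 2 ^ n)
        then (k : ℝ) / 2 ^ n else 0) = 0 := by
      apply Finset.sum_eq_zero
      intro k hk
      rw [Finset.mem_Icc] at hk
      rw [if_neg]
      intro hmem
      have hk1 : ((2:ℝ) ^ n + 1) ≤ (k : ℝ) := by exact_mod_cast hk.1
      have h5 : (k:ℝ) / 2 ^ n ≤ t := hmem.1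
      rw [div_le_iff₀ hP] at h5
      nlinarith
    have hmeq : m = 2 ^ n := by
      have : (m:ℝ) < 2 ^ n + 1 := by nlinarith
      have : m < 2 ^ n + 1 := by exact_mod_cast this
      omega
    rw [gfun, if_pos h1, hsum, if_neg h3]
    rw [hmeq]
    push_cast
    rw [div_self hP.ne']
    rw [min_eq_left (by linarith)]
    ring
  · rcases lt_or_ge t n with hB | hC
    · -- middle case
      have h1 : t ∉ Set.Ioo (1:ℝ) (1 + 2 ^ (-(n:ℤ))) := by
        rw [hzp]; intro h; exact absurd h.2 (not_lt.mpr hB')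
      have h3 : t ∉ Set.Ici (n:ℝ) := by
        simp only [Set.mem_Ici, not_le]; exact hB
      have hmlo : (2:ℤ) ^ n + 1 ≤ m := by
        apply Int.le_floor.mpr
        push_cast
        nlinarith
      have hmhi : m ≤ (n:ℤ) * 2 ^ n - 1 := by
        have : m < (n:ℤ) * 2 ^ n := by
          apply Int.floor_lt.mpr
          push_cast
          nlinarith
        omega
      have hmem : m.toNat ∈ Finset.Icc (2 ^ n + 1) (n * 2 ^ n - 1) := by
        rw [Finset.mem_Icc]
        constructor
        · apply (Int.le_toNat hm0').mpr; push_cast; exact hmlo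
        · rw [Int.toNat_le]
          have hpos : 1 ≤ n * 2 ^ n := by
            have : 0 < n * 2 ^ n := by positivity
            omega
          rw [Nat.cast_sub hpos]
          push_cast
          exact hmhi
      have hcast : ((m.toNat : ℕ) : ℝ) = (m : ℝ) := by
        have h : ((m.toNat : ℤ) : ℝ) = (m : ℝ) := by rw [Int.toNat_of_nonneg hm0']
        exact_mod_cast h
      have hsum : (∑ k ∈ Finset.Icc (2 ^ n + 1) (n * 2 ^ n - 1),
          if t ∈ Set.Ico ((k : ℝ) / 2 ^ n) (((k : ℝ) + 1) / 2 ^ n)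
          then (k : ℝ) / 2 ^ n else 0) = (m:ℝ) / 2 ^ n := by
        rw [Finset.sum_eq_single_of_mem m.toNat hmem]
        · rw [if_pos, hcast]
          constructor
          · rw [hcast, div_le_iff₀ hP]; linarith
          · rw [hcast, lt_div_iff₀ hP]; linarith
        · intro b _ hne
          rw [if_neg]
          intro hb
          have h5 : (b:ℝ) ≤ 2 ^ n * t := by
            have := hb.1; rw [div_le_iff₀ hP] at this; linarith
          have h6 : 2 ^ n * t < (b:ℝ) + 1 := by
            have := hb.2; rw [lt_div_iff₀ hP] at this; linarith
          have : m = (b:ℤ) := by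
            rw [hm]
            rw [Int.floor_eq_iff]
            push_cast
            exact ⟨h5, h6⟩
          apply hne
          omega
      rw [gfun, if_neg h1, hsum, if_neg h3]
      rw [min_eq_left]
      · ring
      · rw [div_le_iff₀ hP]
        have : (m:ℝ) < (n:ℝ) * 2 ^ n := by exact_mod_cast (by omega : m < (n:ℤ) * 2 ^ n)
        linarith [this]
    · -- case t ≥ n
      have h1 : t ∉ Set.Ioo (1:ℝ) (1 + 2 ^ (-(n:ℤ))) := by
        rw [hzp]
        intro h
        have : ((2:ℝ) ^ n)⁻¹ ≤ 1 := by rw [inv_le_one_iff₀]; right; exact h2n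
        have := h.2
        linarith
      have h3 : t ∈ Set.Ici (n:ℝ) := hC
      have hsum : (∑ k ∈ Finset.Icc (2 ^ n + 1) (n * 2 ^ n - 1),
          if t ∈ Set.Ico ((k : ℝ) / 2 ^ n) (((k : ℝ) + 1) / 2 ^ n)
          then (k : ℝ) / 2 ^ n else 0) = 0 := by
        apply Finset.sum_eq_zero
        intro k hk
        rw [Finset.mem_Icc] at hk
        rw [if_neg]
        intro hmem
        have hk2 : k + 1 ≤ n * 2 ^ n := by
          have : 0 < n * 2 ^ n := by positivity
          omega
        have hk2' : (k:ℝ) + 1 ≤ (n:ℝ) * 2 ^ n := by exact_mod_cast hk2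
        have h5 : t < ((k:ℝ) + 1) / 2 ^ n := hmem.2
        rw [lt_div_iff₀ hP] at h5
        nlinarith
      have hmlo : ((n:ℝ)) ≤ (m:ℝ) / 2 ^ n := by
        rw [le_div_iff₀ hP]
        have : ((n:ℤ) * 2 ^ n : ℤ) ≤ m := by
          apply Int.le_floor.mpr
          push_cast
          nlinarith
        have : ((n:ℝ) * 2 ^ n) ≤ (m:ℝ) := by exact_mod_cast this
        linarith
      rw [gfun, if_neg h1, hsum, if_pos h3, min_eq_right hmlo]
      ring

lemma ffun_eq (n : ℕ) (hn : 2 ≤ n) (t : ℝ) (ht : 1 < t) :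
    ffun n t = min ((⌊(2:ℝ) ^ n * t⌋ : ℝ) / 2 ^ n) n := by
  rw [ffun, if_pos ht, gfun_eq n hn t ht]

lemma floor_div_le (n : ℕ) (t : ℝ) (ht : 0 ≤ t) :
    (⌊(2:ℝ) ^ n * t⌋ : ℝ) / 2 ^ n ≤ t := by
  have hP : (0:ℝ) < 2 ^ n := by positivity
  rw [div_le_iff₀ hP]
  have := Int.floor_le ((2:ℝ) ^ n * t)
  linarith

lemma one_le_floor_div (n : ℕ) (t : ℝ) (ht : 1 ≤ t) :
    (1:ℝ) ≤ (⌊(2:ℝ) ^ n * t⌋ : ℝ) / 2 ^ n := by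
  have hP : (0:ℝ) < 2 ^ n := by positivity
  rw [le_div_iff₀ hP]
  have : ((2:ℤ) ^ n : ℤ) ≤ ⌊(2:ℝ) ^ n * t⌋ := by
    apply Int.le_floor.mpr
    push_cast
    nlinarith
  have h2 : ((2:ℝ) ^ n) ≤ (⌊(2:ℝ) ^ n * t⌋ : ℝ) := by exact_mod_cast this
  linarith

lemma floor_div_mono (n : ℕ) (t : ℝ) :
    (⌊(2:ℝ) ^ n * t⌋ : ℝ) / 2 ^ n ≤ (⌊(2:ℝ) ^ (n+1) * t⌋ : ℝ) / 2 ^ (n+1) := by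
  have hP : (0:ℝ) < 2 ^ n := by positivity
  have hP' : (0:ℝ) < 2 ^ (n+1) := by positivity
  have key : 2 * ⌊(2:ℝ) ^ n * t⌋ ≤ ⌊(2:ℝ) ^ (n+1) * t⌋ := by
    apply Int.le_floor.mpr
    push_cast
    have := Int.floor_le ((2:ℝ) ^ n * t)
    rw [pow_succ]
    nlinarith
  have key' : 2 * (⌊(2:ℝ) ^ n * t⌋ : ℝ) ≤ (⌊(2:ℝ) ^ (n+1) * t⌋ : ℝ) := by exact_mod_cast key
  rw [div_le_div_iff₀ hP hP']
  calc (⌊(2:ℝ) ^ n * t⌋ : ℝ) * 2 ^ (n+1)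
      = (2 * (⌊(2:ℝ) ^ n * t⌋ : ℝ)) * 2 ^ n := by rw [pow_succ]; ring
    _ ≤ (⌊(2:ℝ) ^ (n+1) * t⌋ : ℝ) * 2 ^ n := mul_le_mul_of_nonneg_right key' hP.le

lemma ffun_lower (n : ℕ) (hn : 2 ≤ n) (t : ℝ) (ht : 1 < t) (hnt : t ≤ n) :
    t - ((1:ℝ)/2) ^ n ≤ ffun n t := by
  have hP : (0:ℝ) < 2 ^ n := by positivity
  have hhalf : ((1:ℝ)/2) ^ n = (2 ^ n)⁻¹ := by
    rw [div_pow, one_pow, one_div]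
  rw [ffun_eq n hn t ht]
  apply le_min
  · rw [hhalf]
    have h2 : (2:ℝ) ^ n * t < (⌊(2:ℝ) ^ n * t⌋ : ℝ) + 1 := Int.lt_floor_add_one _
    have h3 : t ≤ ((⌊(2:ℝ) ^ n * t⌋ : ℝ) + 1) / 2 ^ n := by
      rw [le_div_iff₀ hP]; nlinarith
    have h4 : ((⌊(2:ℝ) ^ n * t⌋ : ℝ) + 1) / 2 ^ n
        = (⌊(2:ℝ) ^ n * t⌋ : ℝ) / 2 ^ n + (2 ^ n)⁻¹ := by
      rw [add_div, one_div]
    linarith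
  · have : (0:ℝ) < ((1:ℝ)/2) ^ n := by positivity
    linarith

lemma ffun_part_a (t : ℝ) (ht : 1 < t) (n : ℕ) (hn : 2 ≤ n) :
    1 ≤ ffun n t ∧ ffun n t ≤ ffun (n + 1) t ∧ ffun (n + 1) t ≤ t := by
  have hn' : 2 ≤ n + 1 := by omega
  rw [ffun_eq n hn t ht, ffun_eq (n+1) hn' t ht]
  refine ⟨le_min (one_le_floor_div n t ht.le) (by exact_mod_cast (by omega : 1 ≤ n)), ?_, ?_⟩
  · exact min_le_min (floor_div_mono n t) (by push_cast; linarith)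
  · exact min_le_of_left_le (floor_div_le (n+1) t (by linarith))

lemma ffun_tendsto (t : ℝ) (ht : 1 < t) :
    Tendsto (fun n : ℕ => ffun n t) atTop (𝓝 t) := by
  have hlow : Tendsto (fun n : ℕ => t - ((1:ℝ)/2) ^ n) atTop (𝓝 t) := by
    have := tendsto_pow_atTop_nhds_zero_of_lt_one
      (by norm_num : (0:ℝ) ≤ 1/2) (by norm_num : (1:ℝ)/2 < 1)
    simpa using tendsto_const_nhds.sub this
  apply tendsto_of_tendsto_of_tendsto_of_le_of_le' hlow tendsto_const_nhds
  · filter_upwards [eventually_ge_atTop 2,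
      tendsto_natCast_atTop_atTop.eventually_ge_atTop t] with n hn hnt
    exact ffun_lower n hn t ht hnt
  · filter_upwards [eventually_ge_atTop 2] with n hn
    rw [ffun_eq n hn t ht]
    exact min_le_of_left_le (floor_div_le n t (by linarith))
/-- (a) For every `t ≥ 1` and `n ≥ 2`, `1 ≤ f_n(t) ≤ f_{n+1}(t) ≤ t` and
`f_n(t) → t`; (b) for every `t > 0` and `n ≥ 2`, `f_n(t) = 1 / f_n(1/t)`. -/
theorem stmt18 :
    (∀ t : ℝ, 1 ≤ t →
      (∀ n : ℕ, 2 ≤ n → 1 ≤ ffun n t ∧ ffun n t ≤ ffun (n + 1) t ∧ ffun (n + 1) t ≤ t) ∧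
      Tendsto (fun n : ℕ => ffun n t) atTop (𝓝 t)) ∧
    (∀ t : ℝ, 0 < t → ∀ n : ℕ, 2 ≤ n → ffun n t = 1 / ffun n (1 / t)) := by
  constructor
  · intro t ht
    rcases eq_or_lt_of_le ht with h1 | h1
    · subst h1
      refine ⟨fun n _ => by simp [ffun], ?_⟩
      simpa [ffun] using (tendsto_const_nhds : Tendsto (fun _ : ℕ => (1:ℝ)) atTop (𝓝 1))
    · exact ⟨fun n hn => ffun_part_a t h1 n hn, ffun_tendsto t h1⟩
  · intro t ht n _
    rcases lt_trichotomy t 1 with h | h | h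
    · have h1t : 1 < 1 / t := one_lt_one_div ht h
      rw [ffun, if_neg (by linarith), if_pos h, ffun, if_pos h1t]
    · subst h
      simp [ffun]
    · have h1t : 1 / t < 1 := by
        rw [div_lt_one ht]; exact h
      rw [ffun, if_pos h]
      have : ffun n (1 / t) = 1 / gfun n (1 / (1 / t)) := by
        rw [ffun, if_neg (by linarith), if_pos h1t]
      rw [this, one_div_one_div, one_div_one_div]
end
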